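/- arXiv:1904.10072 — 6 statements merged into one kernel-verified Lean document; each statement's English description precedes it below -/
import Mathlib

section
/- In the free group F₂ on two generators x and y, the commutator [x,y] = x y x⁻¹ y⁻¹ is not a product of two squares: there do not exist a, b ∈ F₂ with [x,y] = a² b². -/
open scoped commutatorElement

/-!
Map `F₂` onto the integral Heisenberg group `x ↦ (1,0,0)`, `y ↦ (0,1,0)`, where `[x,y]` goes to
the central element `(0,0,1)`. A product `p² q²` has outer coordinates `2(p + q)`; if these
vanish then `q = -p` there (ℤ has no 2-torsion), and the central coordinate of `p² q²` becomes
even, so it can never be `1`.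
-/

@[ext]
structure Heisenberg (R : Type*) where
  a : R
  b : R
  c : R

namespace Heisenberg

variable {R : Type*} [Ring R]

-- `⟨a, b, c⟩` is the unitriangular matrix `[[1, a, c], [0, 1, b], [0, 0, 1]]`.
instance : Mul (Heisenberg R) := ⟨fun p q => ⟨p.a + q.a, p.b + q.b, p.c + q.c + p.a * q.b⟩⟩
instance : One (Heisenberg R) := ⟨⟨0, 0, 0⟩⟩
instance : Inv (Heisenberg R) := ⟨fun p => ⟨-p.a, -p.b, -p.c + p.a * p.b⟩⟩

@[simp] lemma mul_a (p q : Heisenberg R) : (p * q).a = p.a + q.a := rfl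
@[simp] lemma mul_b (p q : Heisenberg R) : (p * q).b = p.b + q.b := rfl
@[simp] lemma mul_c (p q : Heisenberg R) : (p * q).c = p.c + q.c + p.a * q.b := rfl
@[simp] lemma one_a : (1 : Heisenberg R).a = 0 := rfl
@[simp] lemma one_b : (1 : Heisenberg R).b = 0 := rfl
@[simp] lemma one_c : (1 : Heisenberg R).c = 0 := rfl
@[simp] lemma inv_a (p : Heisenberg R) : p⁻¹.a = -p.a := rfl
@[simp] lemma inv_b (p : Heisenberg R) : p⁻¹.b = -p.b := rfl
@[simp] lemma inv_c (p : Heisenberg R) : p⁻¹.c = -p.c + p.a * p.b := rfl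

instance : Group (Heisenberg R) where
  mul_assoc p q r := by
    ext <;> simp only [mul_a, mul_b, mul_c]
    · abel
    · abel
    · noncomm_ring
  one_mul p := by ext <;> simp
  mul_one p := by ext <;> simp
  inv_mul_cancel p := by
    ext <;> simp only [mul_a, mul_b, mul_c, inv_a, inv_b, inv_c, one_a, one_b, one_c]
    · abel
    · abel
    · noncomm_ring

lemma sq_mul_sq (p q : Heisenberg R) :
    p ^ 2 * q ^ 2 = ⟨2 * (p.a + q.a), 2 * (p.b + q.b),
      2 * (p.c + q.c) + p.a * p.b + q.a * q.b + 4 * p.a * q.b⟩ := by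
  ext <;> simp only [sq, mul_a, mul_b, mul_c] <;> noncomm_ring

lemma commutatorElement_generators :
    ⁅(⟨1, 0, 0⟩ : Heisenberg R), (⟨0, 1, 0⟩ : Heisenberg R)⁆ = ⟨0, 0, 1⟩ := by
  ext <;> simp [commutatorElement_def]

lemma sq_mul_sq_ne_of_odd {n : ℤ} (hn : Odd n) (p q : Heisenberg ℤ) :
    p ^ 2 * q ^ 2 ≠ ⟨0, 0, n⟩ := by
  rw [sq_mul_sq, Ne, mk.injEq]
  rintro ⟨ha, hb, hc⟩
  have hqa : q.a = -p.a := by omega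
  have hqb : q.b = -p.b := by omega
  rw [hqa, hqb] at hc
  exact Int.not_even_iff_odd.2 hn ⟨p.c + q.c - p.a * p.b, by linear_combination -hc⟩

end Heisenberg

theorem stmt_0 :
    ¬ ∃ a b : FreeGroup (Fin 2),
      ⁅FreeGroup.of (0 : Fin 2), FreeGroup.of (1 : Fin 2)⁆ = a ^ 2 * b ^ 2 := by
  rintro ⟨a, b, h⟩
  have h' := congrArg (FreeGroup.lift ![(⟨1, 0, 0⟩ : Heisenberg ℤ), ⟨0, 1, 0⟩]) h
  simp only [map_mul, map_pow, map_commutatorElement, FreeGroup.lift_apply_of,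
    Matrix.cons_val_zero, Matrix.cons_val_one, Heisenberg.commutatorElement_generators] at h'
  exact Heisenberg.sq_mul_sq_ne_of_odd odd_one _ _ h'.symm
end

section
/- For every n ≥ 1, every m ≥ 2 and every r ≥ 1 such that m does not divide r, the power e_n^r of the n-th Engel word is not a product of two m-th powers in F₂: there do not exist a, b ∈ F₂ with e_n^r = a^m b^m. In particular (r = 1), no Engel word e_n is a product of two m-th powers for any m ≥ 2. -/
open scoped commutatorElement

/-- The Engel words: `engel 1 = ⁅y, x⁆` and `engel (n+1) = ⁅y, engel n⁆`. -/
def engel : ℕ → FreeGroup (Fin 2)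
  | 0 => 1
  | 1 => ⁅FreeGroup.of (1 : Fin 2), FreeGroup.of (0 : Fin 2)⁆
  | n + 2 => ⁅FreeGroup.of (1 : Fin 2), engel (n + 1)⁆

/-!
Represent `F₂` by affine maps `z ↦ u z + v` of a commutative ring `R`, sending `x` to `z ↦ z + 1`
and `y` to `z ↦ t z` for a unit `t`. Then `e_n` goes to the translation by `(t - 1)ⁿ`, so `e_nʳ`
goes to the translation by `r (t - 1)ⁿ`. An affine map with linear part `u` has trivial `m`-th
power as soon as `1 + u + ⋯ + u^(m-1) = 0`. The linear part of the image of `a` is `t^k`, where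
`k` is the exponent sum of `y` in `a`; abelianizing `e_nʳ = aᵐ bᵐ` gives that `b` has exponent
sum `-k`. If `k = 0`, take `R = (ℤ/m)⟦X⟧` and `t = 1 + X`: the geometric sums equal `m = 0`
while `r Xⁿ ≠ 0`. If `k ≠ 0`, take `R = ℂ` and `t` a primitive `|k| m`-th root of unity, so that
`t^(±k)` are primitive `m`-th roots of unity.
-/

open Finset

/-- Affine maps `z ↦ u z + v` of `R`. -/
@[ext]
structure Aff (R : Type*) [CommRing R] where
  u : Rˣ
  v : R

namespace Aff

variable {R : Type*} [CommRing R]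

instance : Mul (Aff R) := ⟨fun a b => ⟨a.u * b.u, a.u * b.v + a.v⟩⟩
instance : One (Aff R) := ⟨⟨1, 0⟩⟩
instance : Inv (Aff R) := ⟨fun a => ⟨a.u⁻¹, -(a.u⁻¹ * a.v : R)⟩⟩

@[simp] lemma mul_u (a b : Aff R) : (a * b).u = a.u * b.u := rfl
@[simp] lemma mul_v (a b : Aff R) : (a * b).v = a.u * b.v + a.v := rfl
@[simp] lemma one_u : (1 : Aff R).u = 1 := rfl
@[simp] lemma one_v : (1 : Aff R).v = 0 := rfl
@[simp] lemma inv_u (a : Aff R) : a⁻¹.u = a.u⁻¹ := rfl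
@[simp] lemma inv_v (a : Aff R) : a⁻¹.v = -(a.u⁻¹ * a.v : R) := rfl

instance : Group (Aff R) where
  mul_assoc a b c := by ext <;> simp only [mul_u, mul_v, Units.val_mul, mul_assoc]; ring
  one_mul a := by ext <;> simp
  mul_one a := by ext <;> simp
  inv_mul_cancel a := by ext <;> simp

@[simp] lemma pow_u (a : Aff R) (m : ℕ) : (a ^ m).u = a.u ^ m := by
  induction m with
  | zero => simp
  | succ m ih => rw [pow_succ, mul_u, ih, pow_succ]

lemma pow_v (a : Aff R) (m : ℕ) : (a ^ m).v = (∑ j ∈ range m, (a.u : R) ^ j) * a.v := by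
  induction m with
  | zero => simp
  | succ m ih =>
    rw [pow_succ, mul_v, pow_u, ih, sum_range_succ]
    push_cast
    ring

lemma pow_eq_one_of_geom_sum_eq_zero (a : Aff R) {m : ℕ} (h : ∑ j ∈ range m, (a.u : R) ^ j = 0) :
    a ^ m = 1 := by
  ext
  · have : (a.u : R) ^ m - 1 = 0 := by rw [← geom_sum_mul, h, zero_mul]
    simp [sub_eq_zero.mp this]
  · simp [pow_v, h]

lemma translation_pow (c : R) (r : ℕ) : (⟨1, c⟩ : Aff R) ^ r = ⟨1, r * c⟩ := by
  ext <;> simp [pow_v]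

end Aff

def yExponent : FreeGroup (Fin 2) →* Multiplicative ℤ :=
  FreeGroup.lift ![1, Multiplicative.ofAdd 1]

lemma yExponent_engel (n : ℕ) : yExponent (engel n) = 1 := by
  rcases n with _ | _ | n <;>
    simp only [engel, map_one, map_commutatorElement, commutatorElement_eq_one_iff_mul_comm,
      mul_comm]

lemma yExponent_neg_of_engel_pow_eq {n m r : ℕ} (hm : m ≠ 0) {a b : FreeGroup (Fin 2)}
    (h : engel n ^ r = a ^ m * b ^ m) : (yExponent b).toAdd = -(yExponent a).toAdd := by
  have h' := congrArg (fun w => (yExponent w).toAdd) h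
  simp only [map_pow, map_mul, yExponent_engel, one_pow, toAdd_one, toAdd_mul, toAdd_pow,
    nsmul_eq_mul] at h'
  have : (m : ℤ) * ((yExponent a).toAdd + (yExponent b).toAdd) = 0 := by linear_combination -h'
  linear_combination (mul_eq_zero.1 this).resolve_left (by exact_mod_cast hm)

section Representation

variable {R : Type*} [CommRing R]

def affineRep (t : Rˣ) : FreeGroup (Fin 2) →* Aff R :=
  FreeGroup.lift ![⟨1, 1⟩, ⟨t, 0⟩]

lemma affineRep_u (t : Rˣ) (w : FreeGroup (Fin 2)) :
    (affineRep t w).u = t ^ (yExponent w).toAdd := by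
  induction w using FreeGroup.induction_on with
  | C1 => simp
  | of i => fin_cases i <;> simp [affineRep, yExponent]
  | inv_of i h => simp_all [zpow_neg]
  | mul w w' hw hw' => simp [hw, hw', zpow_add]

lemma affineRep_engel (t : Rˣ) {n : ℕ} (hn : 1 ≤ n) :
    affineRep t (engel n) = ⟨1, ((t : R) - 1) ^ n⟩ := by
  induction n, hn using Nat.le_induction with
  | base =>
    ext
    · simp [engel, affineRep, commutatorElement_def]
    · simp [engel, affineRep, commutatorElement_def]; ring
  | succ n hn ih =>
    obtain ⟨n, rfl⟩ := Nat.exists_eq_add_of_le' hn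
    rw [engel, map_commutatorElement, ih]
    ext
    · simp [affineRep, commutatorElement_def]
    · simp [affineRep, commutatorElement_def, pow_succ]; ring

lemma affineRep_pow_eq_one {t : Rˣ} {w : FreeGroup (Fin 2)} {m : ℕ}
    (h : ∑ j ∈ range m, ((t ^ (yExponent w).toAdd : Rˣ) : R) ^ j = 0) :
    affineRep t (w ^ m) = 1 := by
  rw [map_pow]
  exact Aff.pow_eq_one_of_geom_sum_eq_zero _ (affineRep_u t w ▸ h)

theorem engel_pow_ne_pow_mul_pow (t : Rˣ) {n m r : ℕ} (hn : 1 ≤ n)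
    (hr : (r : R) * ((t : R) - 1) ^ n ≠ 0) {a b : FreeGroup (Fin 2)}
    (ha : ∑ j ∈ range m, ((t ^ (yExponent a).toAdd : Rˣ) : R) ^ j = 0)
    (hb : ∑ j ∈ range m, ((t ^ (yExponent b).toAdd : Rˣ) : R) ^ j = 0) :
    engel n ^ r ≠ a ^ m * b ^ m := by
  intro h
  have h' := congrArg (fun w => (affineRep t w).v) h
  simp only [map_mul, affineRep_pow_eq_one ha, affineRep_pow_eq_one hb, map_pow,
    affineRep_engel t hn, Aff.translation_pow, mul_one, Aff.one_v] at h'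
  exact hr h'

end Representation

open PowerSeries in
lemma natCast_mul_X_pow_ne_zero {m r : ℕ} (h : ¬ m ∣ r) (n : ℕ) :
    (r : (ZMod m)⟦X⟧) * X ^ n ≠ 0 := by
  intro h0
  have := congrArg (coeff n) h0
  rw [← map_natCast (C (R := ZMod m)), coeff_C_mul_X_pow, if_pos rfl, map_zero,
    ZMod.natCast_eq_zero_iff] at this
  exact h this

lemma IsPrimitiveRoot.zpow_of_natAbs_mul {G : Type*} [CommGroup G] {ζ : G} {k : ℤ} {m : ℕ}
    (h : IsPrimitiveRoot ζ (k.natAbs * m)) (hk : k ≠ 0) (hm : m ≠ 0) :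
    IsPrimitiveRoot (ζ ^ k) m := by
  have hpow : IsPrimitiveRoot (ζ ^ k.natAbs) m :=
    h.pow (Nat.pos_of_ne_zero (mul_ne_zero (Int.natAbs_ne_zero.2 hk) hm)) rfl
  rcases Int.natAbs_eq k with hk | hk
  · rw [hk, zpow_natCast]
    exact hpow
  · rw [hk, zpow_neg, zpow_natCast]
    exact hpow.inv

open PowerSeries in
lemma engel_pow_ne_pow_mul_pow_of_yExponent_eq_zero {n m r : ℕ} (hn : 1 ≤ n) (hr : ¬ m ∣ r)
    {a b : FreeGroup (Fin 2)} (ha : (yExponent a).toAdd = 0) (hb : (yExponent b).toAdd = 0) :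
    engel n ^ r ≠ a ^ m * b ^ m := by
  have hX : IsUnit (1 + X : (ZMod m)⟦X⟧) := by simp [isUnit_iff_constantCoeff]
  have hm : (m : (ZMod m)⟦X⟧) = 0 := by
    rw [← map_natCast (C (R := ZMod m)), ZMod.natCast_self, map_zero]
  refine engel_pow_ne_pow_mul_pow hX.unit hn ?_ ?_ ?_
  · simpa using natCast_mul_X_pow_ne_zero hr n
  · simp [ha, hm]
  · simp [hb, hm]

lemma engel_pow_ne_pow_mul_pow_of_yExponent_ne_zero {n m r : ℕ} (hn : 1 ≤ n) (hm : 2 ≤ m)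
    (hr : r ≠ 0) {a b : FreeGroup (Fin 2)} (ha : (yExponent a).toAdd ≠ 0)
    (hb : (yExponent b).toAdd = -(yExponent a).toAdd) :
    engel n ^ r ≠ a ^ m * b ^ m := by
  set k := (yExponent a).toAdd
  have hkm : k.natAbs * m ≠ 0 := mul_ne_zero (Int.natAbs_ne_zero.2 ha) (by omega)
  obtain ⟨t, ht⟩ : ∃ t : ℂˣ, IsPrimitiveRoot t (k.natAbs * m) :=
    ⟨_, (Complex.isPrimitiveRoot_exp _ hkm).isUnit_unit hkm⟩
  have hgeom (l : ℤ) (hl : l.natAbs = k.natAbs) : ∑ j ∈ range m, ((t ^ l : ℂˣ) : ℂ) ^ j = 0 := by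
    have : IsPrimitiveRoot (t ^ l) m := (hl ▸ ht).zpow_of_natAbs_mul (by omega) (by omega)
    exact (IsPrimitiveRoot.coe_units_iff.2 this).geom_sum_eq_zero hm
  refine engel_pow_ne_pow_mul_pow t hn ?_ (hgeom k rfl) (hb ▸ hgeom (-k) (Int.natAbs_neg k))
  have ht1 : (t : ℂ) ≠ 1 := (IsPrimitiveRoot.coe_units_iff.2 ht).ne_one (by
    have := Nat.le_mul_of_pos_left m (Int.natAbs_pos.2 ha)
    omega)
  exact mul_ne_zero (Nat.cast_ne_zero.2 hr) (pow_ne_zero _ (sub_ne_zero.2 ht1))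

theorem stmt_1 (n m r : ℕ) (hn : 1 ≤ n) (hm : 2 ≤ m) (hr : 1 ≤ r) (hdvd : ¬ m ∣ r) :
    ¬ ∃ a b : FreeGroup (Fin 2), engel n ^ r = a ^ m * b ^ m := by
  rintro ⟨a, b, h⟩
  have hb := yExponent_neg_of_engel_pow_eq (by omega) h
  rcases eq_or_ne (yExponent a).toAdd 0 with ha | ha
  · exact engel_pow_ne_pow_mul_pow_of_yExponent_eq_zero hn hdvd ha (by rw [hb, ha, neg_zero]) h
  · exact engel_pow_ne_pow_mul_pow_of_yExponent_ne_zero hn hm (by omega) ha hb h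
end

section
/- Let r, s, k ≥ 1. Then [x^r, y^s] is a product of two k-th powers in F₂ — i.e. there exist a, b ∈ F₂ with [x^r, y^s] = a^k b^k — if and only if k divides r or k divides s. -/
/-!
Send `x` and `y` to the affine maps `t ↦ z t + 1` and `t ↦ w t` over a commutative ring `R`,
with `z w : Rˣ`. The linear part of the image of `g` is `z ^ α * w ^ β`, where `(α, β)` are the
exponent sums of `g`, and `⁅x ^ r, y ^ s⁆` becomes the translation by
`(1 - w ^ s) * (1 + z + ⋯ + z ^ (r - 1))`. If `⁅x ^ r, y ^ s⁆ = a ^ k * b ^ k`, then `b⁻¹` has the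
exponent sums of `a`, and comparing the translation parts of `⁅x ^ r, y ^ s⁆ * b⁻¹ ^ k = a ^ k`
shows that `1 + u + ⋯ + u ^ (k - 1)`, for `u = z ^ α * w ^ β`, divides
`(1 - w ^ s) * (1 + z + ⋯ + z ^ (r - 1))`, whatever `R`, `z`, `w` are.

Over `ℂ`, take `z ^ α * w ^ β` a primitive `k`-th root of unity, so that the divisor vanishes.
If `α ≠ 0`, put `w = 2`: then `z ^ r = 1`, which forces `β = 0` and `k ∣ r`; symmetrically
`k ∣ s` if `β ≠ 0`. If `α = β = 0` the divisor is `k`, and `R = (ZMod k)[T;T⁻¹]`, `z = 1`, `w = T`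
give `k ∣ r`. Conversely, `⁅g ^ k, h⁆ = g ^ k * (h * g⁻¹ * h⁻¹) ^ k` and
`⁅g, h ^ k⁆ = (g * h * g⁻¹) ^ k * h⁻¹ ^ k`.
-/

open Finset
open scoped commutatorElement

section AffineUnit

variable {R : Type*} [CommRing R]

def affineUnit (u : Rˣ) (p : R) : (Matrix (Fin 2) (Fin 2) R)ˣ where
  val := !![(u : R), p; 0, 1]
  inv := !![((u⁻¹ : Rˣ) : R), -(u⁻¹ * p); 0, 1]
  val_inv := by ext i j; fin_cases i <;> fin_cases j <;> simp [Matrix.mul_apply]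
  inv_val := by ext i j; fin_cases i <;> fin_cases j <;> simp [Matrix.mul_apply]

theorem affineUnit_inj {u v : Rˣ} {p q : R} :
    affineUnit u p = affineUnit v q ↔ u = v ∧ p = q := by
  constructor
  · intro h
    have h' := congrArg Units.val h
    exact ⟨Units.ext (congrFun (congrFun h' 0) 0), congrFun (congrFun h' 0) 1⟩
  · rintro ⟨rfl, rfl⟩
    rfl

theorem affineUnit_mul (u v : Rˣ) (p q : R) :
    affineUnit u p * affineUnit v q = affineUnit (u * v) (u * q + p) := by
  ext i j; fin_cases i <;> fin_cases j <;> simp [affineUnit, Matrix.mul_apply]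

theorem affineUnit_one_zero : affineUnit (1 : Rˣ) 0 = 1 := by
  ext i j; fin_cases i <;> fin_cases j <;> simp [affineUnit]

theorem affineUnit_inv (u : Rˣ) (p : R) :
    (affineUnit u p)⁻¹ = affineUnit u⁻¹ (-(u⁻¹ * p)) :=
  Units.ext rfl

theorem affineUnit_pow (u : Rˣ) (p : R) (n : ℕ) :
    affineUnit u p ^ n = affineUnit (u ^ n) ((∑ i ∈ range n, (u : R) ^ i) * p) := by
  induction n with
  | zero => simp [affineUnit_one_zero]
  | succ n ih =>
    rw [pow_succ', ih, affineUnit_mul, pow_succ', geom_sum_succ, add_mul, one_mul, mul_assoc]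

theorem commutatorElement_affineUnit (u v : Rˣ) (p : R) :
    ⁅affineUnit u p, affineUnit v 0⁆ = affineUnit 1 ((1 - v) * p) := by
  rw [commutatorElement_def, affineUnit_inv, affineUnit_inv, affineUnit_mul, affineUnit_mul,
    affineUnit_mul, affineUnit_inj]
  refine ⟨by simp, ?_⟩
  push_cast
  linear_combination -((v : R) * p) * u.mul_inv

theorem geomSum_dvd_of_affineUnit_mul_pow_eq_pow {u : Rˣ} {p q t : R} {k : ℕ}
    (h : affineUnit 1 t * affineUnit u q ^ k = affineUnit u p ^ k) :
    (∑ i ∈ range k, (u : R) ^ i) ∣ t := by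
  rw [affineUnit_pow, affineUnit_pow, affineUnit_mul, affineUnit_inj] at h
  exact ⟨p - q, by rw [mul_sub, ← h.2]; push_cast; ring⟩

theorem exists_lift_affineUnit_eq {ι : Type*} (f : ι → Rˣ) (c : ι → R) (g : FreeGroup ι) :
    ∃ p, FreeGroup.lift (fun i => affineUnit (f i) (c i)) g =
      affineUnit (FreeGroup.lift f g) p := by
  induction g using FreeGroup.induction_on with
  | C1 => exact ⟨0, by simp [affineUnit_one_zero]⟩
  | of i => exact ⟨c i, by simp⟩
  | inv_of i ih =>
    obtain ⟨p, hp⟩ := ih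
    exact ⟨_, by rw [map_inv, hp, affineUnit_inv, map_inv]⟩
  | mul g h ihg ihh =>
    obtain ⟨p, hp⟩ := ihg
    obtain ⟨q, hq⟩ := ihh
    exact ⟨_, by rw [map_mul, hp, hq, affineUnit_mul, map_mul]⟩

end AffineUnit

def FreeGroup.exponentSum {ι : Type*} [DecidableEq ι] : FreeGroup ι →* Multiplicative (ι → ℤ) :=
  FreeGroup.lift fun i => .ofAdd (Pi.single i 1)

theorem FreeGroup.lift_eq_prod_zpow_exponentSum {ι M : Type*} [Fintype ι] [DecidableEq ι]
    [CommGroup M] (f : ι → M) (g : FreeGroup ι) :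
    FreeGroup.lift f g = ∏ i, f i ^ (exponentSum g).toAdd i := by
  induction g using FreeGroup.induction_on with
  | C1 => simp
  | of j => simp [exponentSum, Pi.single_apply]
  | inv_of j ih => simp [ih, Finset.prod_inv_distrib]
  | mul g h ihg ihh => simp [ihg, ihh, zpow_add, Finset.prod_mul_distrib]

theorem map_inv_eq_of_commutatorElement_eq_pow_mul_pow {G M : Type*} [Group G] [CommGroup M]
    [IsMulTorsionFree M] (φ : G →* M) {g h a b : G} {k : ℕ} (hk : k ≠ 0)
    (hc : ⁅g, h⁆ = a ^ k * b ^ k) : φ b⁻¹ = φ a := by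
  have hφ := congrArg φ hc
  rw [map_commutatorElement, commutatorElement_eq_one_iff_mul_comm.2 (mul_comm _ _), map_mul,
    map_pow, map_pow, ← mul_pow, eq_comm, pow_eq_one_iff, or_iff_left hk,
    mul_eq_one_iff_eq_inv] at hφ
  rw [map_inv, ← hφ]

theorem geomSum_dvd_of_commutatorElement_eq {r s k : ℕ} (hk : k ≠ 0) {a b : FreeGroup (Fin 2)}
    (h : ⁅FreeGroup.of (0 : Fin 2) ^ r, FreeGroup.of (1 : Fin 2) ^ s⁆ = a ^ k * b ^ k)
    (R : Type*) [CommRing R] (z w : Rˣ) :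
    (∑ i ∈ range k, ((z ^ (FreeGroup.exponentSum a).toAdd 0 *
        w ^ (FreeGroup.exponentSum a).toAdd 1 : Rˣ) : R) ^ i)
      ∣ (1 - (w : R) ^ s) * ∑ i ∈ range r, (z : R) ^ i := by
  have hlift (g : FreeGroup (Fin 2)) : FreeGroup.lift ![z, w] g =
      z ^ (FreeGroup.exponentSum g).toAdd 0 * w ^ (FreeGroup.exponentSum g).toAdd 1 := by
    rw [FreeGroup.lift_eq_prod_zpow_exponentSum, Fin.prod_univ_two]
    rfl
  have hba : FreeGroup.lift ![z, w] b⁻¹ = FreeGroup.lift ![z, w] a := by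
    rw [hlift, hlift, map_inv_eq_of_commutatorElement_eq_pow_mul_pow _ hk h]
  obtain ⟨p, hp⟩ := exists_lift_affineUnit_eq ![z, w] ![1, 0] a
  obtain ⟨q, hq⟩ := exists_lift_affineUnit_eq ![z, w] ![1, 0] b⁻¹
  have hab : ⁅FreeGroup.of (0 : Fin 2) ^ r, FreeGroup.of (1 : Fin 2) ^ s⁆ * b⁻¹ ^ k = a ^ k := by
    rw [h, inv_pow, mul_inv_cancel_right]
  have hρ := congrArg (FreeGroup.lift fun i => affineUnit (![z, w] i) (![1, 0] i)) hab
  rw [map_mul, map_pow, map_pow, hp, hq, hba, map_commutatorElement, map_pow, map_pow] at hρ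
  rw [← hlift]
  apply geomSum_dvd_of_affineUnit_mul_pow_eq_pow (q := q) (p := p)
  simpa [affineUnit_pow, commutatorElement_affineUnit, mul_comm] using hρ

theorem IsAlgClosed.exists_units_zpow_eq {K : Type*} [Field K] [IsAlgClosed K] {n : ℤ}
    (hn : n ≠ 0) (c : Kˣ) : ∃ z : Kˣ, z ^ n = c := by
  obtain ⟨x, hx⟩ := IsAlgClosed.exists_pow_nat_eq ((c ^ n.sign : Kˣ) : K) (Int.natAbs_pos.2 hn)
  have hx0 : x ≠ 0 := by
    rintro rfl
    rw [zero_pow (Int.natAbs_ne_zero.2 hn)] at hx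
    exact (c ^ n.sign).ne_zero hx.symm
  have hu : Units.mk0 x hx0 ^ n.natAbs = c ^ n.sign := Units.ext (by simpa using hx)
  refine ⟨Units.mk0 x hx0, ?_⟩
  calc Units.mk0 x hx0 ^ n = (Units.mk0 x hx0 ^ n.natAbs) ^ n.sign := by
        rw [← zpow_natCast, ← zpow_mul, mul_comm, Int.sign_mul_natAbs]
    _ = c := by
        rw [hu, ← zpow_mul, ← Int.sign_mul, Int.sign_eq_one_of_pos (mul_self_pos.2 hn), zpow_one]

theorem LaurentPolynomial.eq_zero_of_one_sub_T_mul_C_eq_zero {R : Type*} [Ring R] {n : ℤ}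
    (hn : n ≠ 0) {c : R} (h : (1 - T n) * C c = 0) : c = 0 := by
  rw [sub_mul, one_mul, (commute_T n (C c)).eq, ← single_eq_C_mul_T] at h
  simpa [-single_eq_C_mul_T, AddMonoidAlgebra.coeff_single, Finsupp.single_apply, hn]
    using congrArg (·.coeff 0) h

theorem dvd_of_forall_zpow_mul_zpow_eq {k r s : ℕ} (hk : k ≠ 0) (hs : s ≠ 0) {α β : ℤ}
    (hα : α ≠ 0) {ζ : ℂˣ} (hζ : IsPrimitiveRoot ζ k)
    (h : ∀ z w : ℂˣ, z ^ α * w ^ β = ζ → z ^ r = 1 ∨ w ^ s = 1) : k ∣ r := by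
  set two : ℂˣ := Units.mk0 2 two_ne_zero
  have htwo {n : ℤ} : two ^ n = 1 ↔ n = 0 := by
    rw [← Units.val_eq_one, Units.val_zpow_eq_zpow_val]
    change (2 : ℂ) ^ n = 1 ↔ n = 0
    simpa using Complex.ofReal_inj.trans <|
      zpow_eq_one_iff_right₀ (two_pos.le : (0 : ℝ) ≤ 2) (by norm_num1)
  obtain ⟨z, hz⟩ := IsAlgClosed.exists_units_zpow_eq hα (ζ * two ^ (-β))
  have hzr : z ^ r = 1 := by
    refine (h z two (by rw [hz, zpow_neg, inv_mul_cancel_right])).resolve_right fun h2 => hs ?_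
    exact_mod_cast htwo.1 (by rwa [zpow_natCast] : two ^ (s : ℤ) = 1)
  have hζr : ζ ^ r = two ^ (β * r) := by
    have : (ζ * two ^ (-β)) ^ r = 1 := by
      rw [← hz, ← zpow_natCast, ← zpow_mul, mul_comm, zpow_mul, zpow_natCast, hzr, one_zpow]
    rwa [mul_pow, ← zpow_natCast (two ^ (-β)), ← zpow_mul, mul_eq_one_iff_eq_inv, ← zpow_neg,
      neg_mul, neg_neg] at this
  have hβr : β * r = 0 := by
    have : two ^ (β * r * k) = 1 := by
      rw [zpow_mul, ← hζr, zpow_natCast, ← pow_mul, mul_comm, pow_mul, hζ.pow_eq_one, one_pow]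
    simpa [hk] using htwo.1 this
  rw [← hζ.pow_eq_one_iff_dvd, hζr, hβr, zpow_zero]

theorem dvd_or_dvd_of_forall_geomSum_dvd {k r s : ℕ} (hk : k ≠ 0) (hr : r ≠ 0) (hs : s ≠ 0)
    {α β : ℤ} (h : ∀ (R : Type) [CommRing R] (z w : Rˣ),
      (∑ i ∈ range k, ((z ^ α * w ^ β : Rˣ) : R) ^ i) ∣
        (1 - (w : R) ^ s) * ∑ i ∈ range r, (z : R) ^ i) :
    k ∣ r ∨ k ∣ s := by
  rcases eq_or_ne k 1 with rfl | hk1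
  · exact .inl (one_dvd r)
  by_cases hαβ : α = 0 ∧ β = 0
  · obtain ⟨rfl, rfl⟩ := hαβ
    have hT := h (LaurentPolynomial (ZMod k)) 1 (LaurentPolynomial.isUnit_T 1).unit
    simp only [zpow_zero, mul_one, Units.val_one, one_pow, sum_const, card_range, nsmul_one,
      IsUnit.unit_spec, LaurentPolynomial.T_pow, ← map_natCast LaurentPolynomial.C,
      ZMod.natCast_self, map_zero, zero_dvd_iff] at hT
    exact .inl <| (ZMod.natCast_eq_zero_iff r k).1
      (LaurentPolynomial.eq_zero_of_one_sub_T_mul_C_eq_zero (by exact_mod_cast hs) hT)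
  obtain ⟨ζ, hζ⟩ : ∃ ζ : ℂˣ, IsPrimitiveRoot ζ k :=
    ⟨_, (Complex.isPrimitiveRoot_exp k hk).isUnit_unit hk⟩
  have hroots (z w : ℂˣ) (hzw : z ^ α * w ^ β = ζ) : z ^ r = 1 ∨ w ^ s = 1 := by
    have hdvd := h ℂ z w
    rw [hzw, (IsPrimitiveRoot.coe_units_iff.2 hζ).geom_sum_eq_zero (by omega), zero_dvd_iff,
      mul_eq_zero, sub_eq_zero] at hdvd
    rcases hdvd with hw | hz
    · exact .inr (Units.ext (by simp [hw]))
    · refine .inl (Units.ext ?_)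
      rw [Units.val_pow_eq_pow_val, Units.val_one, ← sub_eq_zero, ← geom_sum_mul, hz, zero_mul]
  rcases eq_or_ne α 0 with rfl | hα
  · have hβ : β ≠ 0 := by tauto
    exact .inr (dvd_of_forall_zpow_mul_zpow_eq hk hr hβ hζ fun w z hwz =>
      (hroots z w (by rwa [mul_comm])).symm)
  · exact .inl (dvd_of_forall_zpow_mul_zpow_eq hk hs hα hζ hroots)

theorem commutatorElement_pow_left {G : Type*} [Group G] (g h : G) (k : ℕ) :
    ⁅g ^ k, h⁆ = g ^ k * (h * g⁻¹ * h⁻¹) ^ k := by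
  rw [commutatorElement_def, conj_pow, inv_pow]
  group

theorem commutatorElement_pow_right {G : Type*} [Group G] (g h : G) (k : ℕ) :
    ⁅g, h ^ k⁆ = (g * h * g⁻¹) ^ k * h⁻¹ ^ k := by
  rw [commutatorElement_def, conj_pow, inv_pow]

theorem stmt_2 (r s k : ℕ) (hr : 1 ≤ r) (hs : 1 ≤ s) (hk : 1 ≤ k) :
    (∃ a b : FreeGroup (Fin 2),
        ⁅FreeGroup.of (0 : Fin 2) ^ r, FreeGroup.of (1 : Fin 2) ^ s⁆ = a ^ k * b ^ k)
      ↔ (k ∣ r ∨ k ∣ s) := by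
  constructor
  · rintro ⟨a, b, h⟩
    exact dvd_or_dvd_of_forall_geomSum_dvd (by omega) (by omega) (by omega)
      fun R _ z w => geomSum_dvd_of_commutatorElement_eq (by omega) h R z w
  · rintro (⟨m, rfl⟩ | ⟨m, rfl⟩)
    · exact ⟨_, _, by rw [pow_mul', commutatorElement_pow_left]⟩
    · exact ⟨_, _, by rw [pow_mul', commutatorElement_pow_right]⟩
end

section
/- Let n ≥ 3 and let F_n be the free group freely generated by x₁, x₂, …, x_n. For every m ≥ 1 and every k ≥ 2, the equation x₁^m x₂^m ⋯ x_n^m = a^k b^k has no solution a, b ∈ F_n. -/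
open Finset

/-! Since `n ≥ 3`, some homomorphism `θ : F_n → (ℚ, +)` kills `a` and `b` but not a generator
`x_{i₀}`. Through the group algebra `R = (ℤ/k)[ℚ]` this gives `χ : F_n → Rˣ`, and `F_n` acts on `R`
by the affine maps `x_i ↦ (r ↦ χ(x_i) r + δ_{i i₀})`. Then `a` and `b` act by translations, which
have order dividing `k`, so `a^k b^k` acts trivially; but `x₁^m ⋯ x_n^m` sends `0` to a unit
multiple of `1 + χ(x_{i₀}) + ⋯ + χ(x_{i₀})^{m-1}`, which is nonzero because `χ(x_{i₀})` has
infinite order. -/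

namespace AffineEquiv

variable {k V P : Type*} [Ring k] [AddCommGroup V] [Module k V] [AddTorsor V P]

instance applyMulAction : MulAction (P ≃ᵃ[k] P) P where
  smul f p := f p
  one_smul _ := rfl
  mul_smul _ _ _ := rfl

theorem smul_def (f : P ≃ᵃ[k] P) (p : P) : f • p = f p := rfl

theorem eq_constVAdd_of_linear_eq_refl {f : P ≃ᵃ[k] P} (hf : f.linear = LinearEquiv.refl k V)
    (p : P) : f = constVAdd k P (f p -ᵥ p) := by
  ext x
  rw [constVAdd_apply, ← vsub_vadd x p, f.map_vadd, hf, LinearEquiv.refl_apply, vadd_comm,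
    vsub_vadd]

theorem pow_eq_one_of_linear_eq_refl {N : ℕ} (hN : ∀ v : V, N • v = 0) {f : P ≃ᵃ[k] P}
    (hf : f.linear = LinearEquiv.refl k V) : f ^ N = 1 := by
  obtain ⟨p⟩ := (inferInstance : Nonempty P)
  rw [eq_constVAdd_of_linear_eq_refl hf p, ← constVAdd_nsmul, hN, constVAdd_zero]
  rfl

variable {R : Type*} [CommRing R]

def unitMulAdd (u : Rˣ) (t : R) : R ≃ᵃ[R] R :=
  constVAdd R R t * homothetyUnitsMulHom 0 u

@[simp]
theorem unitMulAdd_apply (u : Rˣ) (t x : R) : unitMulAdd u t x = u * x + t := by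
  simp [unitMulAdd, AffineMap.homothety_apply, add_comm]

@[simp]
theorem linear_unitMulAdd (u : Rˣ) (t : R) :
    (unitMulAdd u t).linear = (homothetyUnitsMulHom (0 : R) u).linear :=
  one_mul (linearHom (homothetyUnitsMulHom (0 : R) u))

theorem unitMulAdd_pow_apply_zero (u : Rˣ) (t : R) (m : ℕ) :
    (unitMulAdd u t ^ m) 0 = (∑ j ∈ range m, (u : R) ^ j) * t := by
  induction m with
  | zero => simp
  | succ m ih =>
    rw [pow_succ', coe_mul, Function.comp_apply, ih, unitMulAdd_apply, geom_sum_succ]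
    ring

end AffineEquiv

theorem Subgroup.list_prod_map_mem_iff {G ι : Type*} [Group G] (S : Subgroup G) {f : ι → G}
    {i₀ : ι} : ∀ {l : List ι}, l.Nodup → i₀ ∈ l → (∀ i ∈ l, i ≠ i₀ → f i ∈ S) →
      ((l.map f).prod ∈ S ↔ f i₀ ∈ S)
  | [], _, hi₀, _ => absurd hi₀ List.not_mem_nil
  | j :: l, hl, hi₀, hS => by
    obtain ⟨hj, hl⟩ := List.nodup_cons.mp hl
    rw [List.map_cons, List.prod_cons]
    by_cases hji : j = i₀
    · subst hji
      refine S.mul_mem_cancel_right (S.list_prod_mem ?_)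
      simp only [List.mem_map]
      rintro _ ⟨i, hi, rfl⟩
      exact hS i (List.mem_cons_of_mem _ hi) (ne_of_mem_of_not_mem hi hj)
    · rw [S.mul_mem_cancel_left (hS j List.mem_cons_self hji)]
      exact list_prod_map_mem_iff S hl ((List.mem_cons.mp hi₀).resolve_left (Ne.symm hji))
        fun i hi => hS i (List.mem_cons_of_mem _ hi)

theorem MonoidAlgebra.geom_sum_of_ne_zero {R G : Type*} [Semiring R] [Nontrivial R]
    [Monoid G] [IsMulTorsionFree G] {g : G} (hg : g ≠ 1) {m : ℕ} (hm : m ≠ 0) :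
    ∑ j ∈ range m, of R G g ^ j ≠ 0 := by
  classical
  intro h
  have hcoeff : (∑ j ∈ range m, of R G g ^ j).coeff 1 = 1 := by
    simp [of_apply, single_pow, Finsupp.single_apply, hg, hm]
  rw [h] at hcoeff
  simp at hcoeff

namespace FreeGroup

theorem exists_hom_eq_one_of_card_lt {K ι κ : Type*} [Field K] [Fintype ι] [Fintype κ]
    (hκ : Fintype.card κ < Fintype.card ι) (w : κ → FreeGroup ι) :
    ∃ θ : FreeGroup ι →* Multiplicative K, ∃ i₀, (∀ j, θ (w j) = 1) ∧ θ (of i₀) ≠ 1 := by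
  classical
  let ε : FreeGroup ι →* Multiplicative (ι → K) := lift fun i => .ofAdd (Pi.single i 1)
  let W := Submodule.span K (Set.range fun j => (ε (w j)).toAdd)
  have hW : W < ⊤ := Submodule.lt_top_of_finrank_lt_finrank <|
    (finrank_range_le_card _).trans_lt (by simpa using hκ)
  obtain ⟨f, hf0, hWf⟩ := W.exists_le_ker_of_lt_top hW
  obtain ⟨i₀, hi₀⟩ : ∃ i, f (Pi.single i 1) ≠ 0 := by
    by_contra! h
    exact hf0 ((Pi.basisFun K ι).ext fun i => by simpa using h i)
  refine ⟨f.toAddMonoidHom.toMultiplicative.comp ε, i₀, fun j => ?_, by simpa [ε] using hi₀⟩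
  simpa using hWf (Submodule.subset_span ⟨j, rfl⟩)

theorem prod_map_of_pow_ne_pow_mul_pow {ι R : Type*} [CommRing R] {N : ℕ}
    (hN : ∀ r : R, N • r = 0) (χ : FreeGroup ι →* Rˣ) {a b : FreeGroup ι} (ha : χ a = 1)
    (hb : χ b = 1) {l : List ι} (hl : l.Nodup) {i₀ : ι} (hi₀ : i₀ ∈ l) {m : ℕ}
    (hgeom : ∑ j ∈ range m, (χ (of i₀) : R) ^ j ≠ 0) :
    (l.map fun i => of i ^ m).prod ≠ a ^ N * b ^ N := by
  classical
  intro h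
  let ψ : FreeGroup ι →* (R ≃ᵃ[R] R) :=
    lift fun i => AffineEquiv.unitMulAdd (χ (of i)) (if i = i₀ then 1 else 0)
  have hlin : AffineEquiv.linearHom.comp ψ =
      (AffineEquiv.linearHom.comp (AffineEquiv.homothetyUnitsMulHom (0 : R))).comp χ :=
    ext_hom _ _ fun i => by simp [ψ]
  have hpow : ∀ x, χ x = 1 → ψ x ^ N = 1 := fun x hx =>
    AffineEquiv.pow_eq_one_of_linear_eq_refl hN <| by
      simpa [hx, AffineEquiv.one_def] using DFunLike.congr_fun hlin x
  set S := MulAction.stabilizer (R ≃ᵃ[R] R) (0 : R)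
  have hother : ∀ i ∈ l, i ≠ i₀ → ψ (of i ^ m) ∈ S := fun i _ hi => by
    rw [_root_.map_pow]
    refine S.pow_mem ?_ m
    simp [S, ψ, MulAction.mem_stabilizer_iff, AffineEquiv.smul_def, hi]
  have hfix : ψ ((l.map fun i => of i ^ m).prod) ∈ S := by
    rw [h, _root_.map_mul, _root_.map_pow, _root_.map_pow, hpow a ha, hpow b hb, one_mul]
    exact S.one_mem
  rw [map_list_prod, List.map_map,
    S.list_prod_map_mem_iff (f := ψ ∘ fun i => of i ^ m) hl hi₀ hother] at hfix
  apply hgeom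
  simpa [S, ψ, MulAction.mem_stabilizer_iff, AffineEquiv.smul_def,
    AffineEquiv.unitMulAdd_pow_apply_zero] using hfix

end FreeGroup

theorem stmt_3 (n : ℕ) (hn : 3 ≤ n) (m k : ℕ) (hm : 1 ≤ m) (hk : 2 ≤ k) :
    ¬ ∃ a b : FreeGroup (Fin n),
      ((List.finRange n).map (fun i => FreeGroup.of i ^ m)).prod = a ^ k * b ^ k := by
  rintro ⟨a, b, h⟩
  obtain ⟨θ, i₀, hab, hi₀⟩ :=
    FreeGroup.exists_hom_eq_one_of_card_lt (K := ℚ) (by simp; omega) ![a, b]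
  have ha : θ a = 1 := hab 0
  have hb : θ b = 1 := hab 1
  have : Fact (1 < k) := ⟨hk⟩
  let χ : FreeGroup (Fin n) →* (MonoidAlgebra (ZMod k) (Multiplicative ℚ))ˣ :=
    (Units.map (MonoidAlgebra.of _ _)).comp (toUnits.toMonoidHom.comp θ)
  refine FreeGroup.prod_map_of_pow_ne_pow_mul_pow (N := k) (fun r => ?_) χ
    (by simp [χ, ha]) (by simp [χ, hb]) (List.nodup_finRange n)
    (List.mem_finRange i₀) ?_ h
  · rw [← Nat.cast_smul_eq_nsmul (ZMod k), ZMod.natCast_self, zero_smul]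
  · simpa [χ] using MonoidAlgebra.geom_sum_of_ne_zero (R := ZMod k) hi₀ (by omega : m ≠ 0)
end

section
/- There exists an isomorphism of abelian groups φ from the quotient F₂'/F₂'' onto the additive group of the Laurent polynomial ring ℤ[X^{±1}, Y^{±1}] (the group ring ℤ[ℤ × ℤ]) such that, for all integers n and m, φ sends the class of x^n y^m [x,y] y^{-m} x^{-n} to the monomial X^n Y^m. (Equivalently, the winding invariant map W : F₂' → ℤ[X^{±1},Y^{±1}] is a surjective group homomorphism with kernel F₂''. This is the Conway–Lagarias theorem.) -/
/-!
The Magnus representation `x ↦ (1, e₁)`, `y ↦ (0, e₂)` of `F₂` in `ℤ[ℤ²] ⋊ ℤ²` records the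
abelianized Fox derivative `∂w/∂x` together with the exponent sums of `w`. It sends `[x, y]` to
`(1 - Y, 0)`, hence a conjugate `g [x, y] g⁻¹` to `((1 - Y) XⁿYᵐ, 0)`, where `(n, m)` are the
exponent sums of `g`. As `F₂'` is the normal closure of `[x, y]`, it lands in
`(1 - Y) ℤ[ℤ²] × {0}`, where the group law is addition; dividing by `1 - Y` gives a homomorphism
`W : F₂' → ℤ[ℤ²]` with `W (g [x, y] g⁻¹) = XⁿYᵐ`. Sending `XⁿYᵐ` back to the class of
`xⁿyᵐ [x, y] (xⁿyᵐ)⁻¹` inverts `W` on `F₂'/F₂''`, because the class of `g [x, y] g⁻¹` there only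
depends on `g` modulo `F₂'`, i.e. on its exponent sums.
-/

open scoped commutatorElement

noncomputable section

open AddMonoidAlgebra

lemma AddMonoidAlgebra.single_add_one {k G : Type*} [Semiring k] [AddMonoid G] (u v : G) :
    single (u + v) (1 : k) = single u 1 * single v 1 := by
  rw [single_mul_single, mul_one]

/-- The wreath product `k ≀ G = k[G] ⋊ G`. Its base is finitely supported (unlike
`RegularWreathProduct`), so that it is a ring in which one can divide by non-zero-divisors. -/
@[ext]
structure Wreath (k G : Type*) [CommRing k] [AddCommGroup G] where
  poly : k[G]
  pos : G

namespace Wreath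

variable {k G : Type*} [CommRing k] [AddCommGroup G]

instance : Group (Wreath k G) where
  mul a b := ⟨a.poly + single a.pos 1 * b.poly, a.pos + b.pos⟩
  one := ⟨0, 0⟩
  inv a := ⟨-(single (-a.pos) 1 * a.poly), -a.pos⟩
  mul_assoc a b c := by
    ext1
    · change a.poly + single a.pos 1 * b.poly + single (a.pos + b.pos) 1 * c.poly =
        a.poly + single a.pos 1 * (b.poly + single b.pos 1 * c.poly)
      rw [single_add_one]
      ring
    · exact add_assoc _ _ _
  one_mul a := by
    ext1
    · change 0 + single 0 1 * a.poly = a.poly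
      rw [← one_def, zero_add, one_mul]
    · exact zero_add _
  mul_one a := by
    ext1
    · change a.poly + single a.pos 1 * 0 = a.poly
      rw [mul_zero, add_zero]
    · exact add_zero _
  inv_mul_cancel a := by
    ext1 <;> exact neg_add_cancel _

@[simp] lemma mul_poly (a b : Wreath k G) : (a * b).poly = a.poly + single a.pos 1 * b.poly := rfl
@[simp] lemma mul_pos (a b : Wreath k G) : (a * b).pos = a.pos + b.pos := rfl
@[simp] lemma one_poly : (1 : Wreath k G).poly = 0 := rfl
@[simp] lemma one_pos : (1 : Wreath k G).pos = 0 := rfl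
@[simp] lemma inv_poly (a : Wreath k G) : a⁻¹.poly = -(single (-a.pos) 1 * a.poly) := rfl
@[simp] lemma inv_pos (a : Wreath k G) : a⁻¹.pos = -a.pos := rfl

lemma conj_mk_zero (g : Wreath k G) (p : k[G]) :
    g * ⟨p, 0⟩ * g⁻¹ = ⟨single g.pos 1 * p, 0⟩ := by
  ext1
  · have : single g.pos (1 : k) * single (-g.pos) 1 = 1 := by
      rw [← single_add_one, add_neg_cancel, one_def]
    simp only [mul_poly, inv_poly, mul_pos, add_zero]
    linear_combination (-g.poly) * this
  · simp

def posHom : Wreath k G →* Multiplicative G where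
  toFun a := .ofAdd a.pos
  map_one' := rfl
  map_mul' _ _ := rfl

@[simp] lemma zpow_pos (a : Wreath k G) (n : ℤ) : (a ^ n).pos = n • a.pos :=
  congrArg Multiplicative.toAdd (map_zpow posHom a n)

def baseSubgroup (I : Ideal k[G]) : Subgroup (Wreath k G) where
  carrier := {a | a.pos = 0 ∧ a.poly ∈ I}
  one_mem' := ⟨rfl, I.zero_mem⟩
  mul_mem' := by
    rintro a b ⟨ha, ha'⟩ ⟨hb, hb'⟩
    exact ⟨by simp [ha, hb], I.add_mem ha' (I.mul_mem_left _ hb')⟩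
  inv_mem' := by
    rintro a ⟨ha, ha'⟩
    exact ⟨by simp [ha], I.neg_mem (I.mul_mem_left _ ha')⟩

end Wreath

theorem commutator_eq_normalClosure_of_closure_pair {G : Type*} [Group G] {a b : G}
    (h : Subgroup.closure {a, b} = ⊤) :
    commutator G = Subgroup.normalClosure {⁅a, b⁆} := by
  refine le_antisymm ?_ (Subgroup.normalClosure_le_normal ?_)
  · set N := Subgroup.normalClosure {⁅a, b⁆}
    rw [← Subgroup.Normal.quotient_commutative_iff_commutator_le]
    set π := QuotientGroup.mk' N
    have hab : π a * π b = π b * π a := by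
      rw [← commutatorElement_eq_one_iff_mul_comm, ← map_commutatorElement,
        QuotientGroup.mk'_apply, QuotientGroup.eq_one_iff]
      exact Subgroup.subset_normalClosure rfl
    have htop : Subgroup.closure {π a, π b} = ⊤ := by
      rw [← Set.image_pair, ← MonoidHom.map_closure, h, ← MonoidHom.range_eq_map,
        MonoidHom.range_eq_top]
      exact QuotientGroup.mk'_surjective N
    have := Subgroup.isMulCommutative_closure (k := {π a, π b}) (by
      simp only [Set.mem_insert_iff, Set.mem_singleton_iff]
      rintro _ (rfl | rfl) _ (rfl | rfl) <;> first | rfl | exact hab | exact hab.symm)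
    exact ⟨⟨fun p q => setLike_mul_comm (htop ▸ Subgroup.mem_top p) (htop ▸ Subgroup.mem_top q)⟩⟩
  · rw [Set.singleton_subset_iff]
    exact Subgroup.commutator_mem_commutator (Subgroup.mem_top a) (Subgroup.mem_top b)

namespace ConwayLagarias

local notation "F₂" => FreeGroup (Fin 2)

abbrev x : F₂ := FreeGroup.of 0
abbrev y : F₂ := FreeGroup.of 1

def magnus : F₂ →* Wreath ℤ (ℤ × ℤ) :=
  FreeGroup.lift ![⟨1, (1, 0)⟩, ⟨0, (0, 1)⟩]

@[simp] lemma magnus_x : magnus x = ⟨1, (1, 0)⟩ := by simp [magnus]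
@[simp] lemma magnus_y : magnus y = ⟨0, (0, 1)⟩ := by simp [magnus]

def oneSubY : ℤ[ℤ × ℤ] := 1 - single (0, 1) 1

lemma oneSubY_ne_zero : oneSubY ≠ 0 := by
  rw [oneSubY, sub_ne_zero, one_def, Ne, single_left_inj one_ne_zero]
  simp [Prod.ext_iff]

lemma magnus_commutator : magnus ⁅x, y⁆ = ⟨oneSubY, 0⟩ := by
  ext1
  · simp [commutatorElement_def, oneSubY, single_mul_single, sub_eq_add_neg]
  · simp [commutatorElement_def]

lemma magnus_conj_commutator (g : F₂) :
    magnus (g * ⁅x, y⁆ * g⁻¹) = ⟨single (magnus g).pos 1 * oneSubY, 0⟩ := by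
  rw [map_mul, map_mul, map_inv, magnus_commutator, Wreath.conj_mk_zero]

def xyPow (u : ℤ × ℤ) : F₂ := x ^ u.1 * y ^ u.2

lemma pos_magnus_xyPow (u : ℤ × ℤ) : (magnus (xyPow u)).pos = u := by
  simp [xyPow]

def ofXyPow : Multiplicative (ℤ × ℤ) →* Abelianization F₂ :=
  MonoidHom.mk' (fun u => Abelianization.of (xyPow u.toAdd)) fun u v => by
    simp only [xyPow, toAdd_mul, Prod.fst_add, Prod.snd_add, map_mul, map_zpow, zpow_add]
    exact mul_mul_mul_comm _ _ _ _

lemma of_eq_of_xyPow (g : F₂) :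
    Abelianization.of g = Abelianization.of (xyPow (magnus g).pos) := by
  have : ofXyPow.comp (Wreath.posHom.comp magnus) = Abelianization.of := by
    refine FreeGroup.ext_hom _ _ fun i => ?_
    fin_cases i <;> simp [ofXyPow, Wreath.posHom, xyPow]
  exact (DFunLike.congr_fun this g).symm

lemma mul_inv_xyPow_mem_commutator (g : F₂) :
    g * (xyPow (magnus g).pos)⁻¹ ∈ commutator F₂ := by
  rw [← Abelianization.ker_of, MonoidHom.mem_ker, map_mul, map_inv, of_eq_of_xyPow g,
    mul_inv_cancel]

lemma closure_x_y : Subgroup.closure {x, y} = ⊤ := by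
  rw [← FreeGroup.closure_range_of]
  congr
  ext g
  simp [Fin.exists_fin_two, eq_comm]

lemma commutator_le_of_forall_conj_mem {H : Subgroup F₂} (h : ∀ g, g * ⁅x, y⁆ * g⁻¹ ∈ H) :
    commutator F₂ ≤ H := by
  rw [commutator_eq_normalClosure_of_closure_pair closure_x_y, Subgroup.normalClosure,
    Subgroup.closure_le]
  intro v hv
  obtain ⟨g, rfl⟩ : ∃ g, g * ⁅x, y⁆ * g⁻¹ = v := by
    simpa [Group.mem_conjugatesOfSet_iff, isConj_iff] using hv
  exact h g

def conjCommutator (g : F₂) : commutator F₂ :=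
  ⟨g * ⁅x, y⁆ * g⁻¹, Subgroup.Normal.conj_mem inferInstance _
    (Subgroup.commutator_mem_commutator (Subgroup.mem_top x) (Subgroup.mem_top y)) g⟩

lemma commutator_hom_ext {M : Type*} [Monoid M] {f f' : commutator F₂ →* M}
    (h : ∀ g, f (conjCommutator g) = f' (conjCommutator g)) : f = f' := by
  have : commutator F₂ ≤ (MonoidHom.eqLocus f f').map (commutator F₂).subtype :=
    commutator_le_of_forall_conj_mem fun g => ⟨conjCommutator g, h g, rfl⟩
  refine MonoidHom.ext fun w => ?_
  obtain ⟨w', hw', hw⟩ := this w.2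
  obtain rfl : w' = w := Subtype.ext hw
  exact hw'

lemma magnus_mem_baseSubgroup {w : F₂} (hw : w ∈ commutator F₂) :
    magnus w ∈ Wreath.baseSubgroup (Ideal.span {oneSubY}) := by
  refine commutator_le_of_forall_conj_mem (H := (Wreath.baseSubgroup _).comap magnus)
    (fun g => ?_) hw
  rw [Subgroup.mem_comap, magnus_conj_commutator]
  exact ⟨rfl, Ideal.mul_mem_left _ _ (Ideal.mem_span_singleton_self _)⟩

def winding : commutator F₂ →* Multiplicative ℤ[ℤ × ℤ] where
  toFun w := .ofAdd ((LinearEquiv.toSpanNonzeroSingleton _ _ _ oneSubY_ne_zero).symm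
    ⟨(magnus w).poly, (magnus_mem_baseSubgroup w.2).2⟩)
  map_one' := by simp
  map_mul' a b := by
    rw [← ofAdd_add, ← map_add]
    congr 3
    simp [(magnus_mem_baseSubgroup a.2).1, ← one_def]

lemma winding_eq {w : commutator F₂} {c : ℤ[ℤ × ℤ]} (h : (magnus w).poly = c * oneSubY) :
    winding w = .ofAdd c := by
  refine congrArg Multiplicative.ofAdd ((LinearEquiv.symm_apply_eq _).2 ?_)
  ext1
  simp [h]

lemma winding_conjCommutator (g : F₂) :
    winding (conjCommutator g) = .ofAdd (single (magnus g).pos 1) :=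
  winding_eq (by rw [conjCommutator, magnus_conj_commutator])

lemma of_conjCommutator (g : F₂) : Abelianization.of (conjCommutator g) =
    Abelianization.of (conjCommutator (xyPow (magnus g).pos)) := by
  set u : commutator F₂ := ⟨_, mul_inv_xyPow_mem_commutator g⟩
  have : conjCommutator g = u * conjCommutator (xyPow (magnus g).pos) * u⁻¹ :=
    Subtype.ext (by simp only [conjCommutator, Subgroup.coe_mul, InvMemClass.coe_inv, u]; group)
  rw [this, map_mul, map_mul, map_inv, mul_inv_cancel_comm]

def windingInv : Multiplicative ℤ[ℤ × ℤ] →* Abelianization (commutator F₂) :=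
  AddMonoidHom.toMultiplicativeLeft <| (Finsupp.liftAddHom fun u =>
    zmultiplesHom _ (.ofMul (Abelianization.of (conjCommutator (xyPow u))))).comp
      coeffAddEquiv.toAddMonoidHom

lemma windingInv_single (u : ℤ × ℤ) :
    windingInv (.ofAdd (single u 1)) = Abelianization.of (conjCommutator (xyPow u)) := by
  simp [windingInv]

lemma lift_winding_windingInv (r : ℤ[ℤ × ℤ]) :
    Abelianization.lift winding (windingInv (.ofAdd r)) = .ofAdd r := by
  induction r using AddMonoidAlgebra.induction_on with
  | of u =>
    rw [of_apply, toAdd_ofAdd, windingInv_single, Abelianization.lift_apply_of,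
      winding_conjCommutator, pos_magnus_xyPow]
  | add p q hp hq => rw [ofAdd_add, map_mul, map_mul, hp, hq]
  | smul c p hp => rw [ofAdd_zsmul, map_zpow, map_zpow, hp]

def windingEquiv : Abelianization (commutator F₂) ≃* Multiplicative ℤ[ℤ × ℤ] :=
  MonoidHom.toMulEquiv (Abelianization.lift winding) windingInv
    (Abelianization.hom_ext _ _ <| commutator_hom_ext fun g => by
      simp [winding_conjCommutator, windingInv_single, ← of_conjCommutator])
    (MonoidHom.ext fun r => lift_winding_windingInv r.toAdd)

lemma windingEquiv_of_conjCommutator_xyPow (u : ℤ × ℤ) :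
    windingEquiv (Abelianization.of (conjCommutator (xyPow u))) = .ofAdd (single u 1) := by
  simp [windingEquiv, winding_conjCommutator, pos_magnus_xyPow]

end ConwayLagarias

end

theorem stmt_4 :
    ∃ φ : Abelianization ↥(commutator (FreeGroup (Fin 2))) ≃*
        Multiplicative (AddMonoidAlgebra ℤ (ℤ × ℤ)),
      ∀ (n m : ℤ) (w : ↥(commutator (FreeGroup (Fin 2)))),
        (w : FreeGroup (Fin 2)) =
          FreeGroup.of (0 : Fin 2) ^ n * FreeGroup.of (1 : Fin 2) ^ m *
            ⁅FreeGroup.of (0 : Fin 2), FreeGroup.of (1 : Fin 2)⁆ *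
            FreeGroup.of (1 : Fin 2) ^ (-m) * FreeGroup.of (0 : Fin 2) ^ (-n) →
        φ (Abelianization.of w) =
          Multiplicative.ofAdd (AddMonoidAlgebra.single (n, m) (1 : ℤ)) := by
  refine ⟨ConwayLagarias.windingEquiv, fun n m w hw => ?_⟩
  obtain rfl : w = ConwayLagarias.conjCommutator (ConwayLagarias.xyPow (n, m)) :=
    Subtype.ext <| hw.trans <| by
      simp only [ConwayLagarias.conjCommutator, ConwayLagarias.xyPow]
      group
  exact ConwayLagarias.windingEquiv_of_conjCommutator_xyPow (n, m)
end

section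
/- An element z ∈ F₂ is a product of cubes in F₂ (i.e. z = u₁³ u₂³ ⋯ u_s³ for some s ≥ 1 and u₁, …, u_s ∈ F₂) if and only if its image in M₂ = F₂/F₂'' is a product of cubes, i.e. if and only if there exist u₁, …, u_s ∈ F₂ with z·(u₁³ u₂³ ⋯ u_s³)⁻¹ ∈ F₂''. -/
/-!
In a group of exponent 3 any two conjugates of an element commute, since
`(u * v⁻¹) ^ 3 = (u * v) ^ 3 = v ^ 3 = 1` already forces `u` to commute with `v⁻¹ * u * v`.
Hence the normal closure of `⁅a, b⁆` is abelian; when `a` and `b` generate the group it contains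
the derived subgroup, so a two-generated group of exponent 3 is metabelian. Applied to `F₂` modulo
the normal subgroup of products of cubes, this puts `F₂''` inside that subgroup.
-/

open Subgroup
open scoped commutatorElement

section ExponentThree

variable {G : Type*} [Group G]

theorem mul_mul_eq_inv_mul_inv_mul_inv {a b : G} (h : (a * b) ^ 3 = 1) :
    a * b * a = b⁻¹ * a⁻¹ * b⁻¹ := by
  have : a * b * a * (b * a * b) = 1 := by rw [← h, pow_three']; group
  rw [eq_inv_of_mul_eq_one_left this]; group

theorem commute_conj_of_pow_three (h : ∀ g : G, g ^ 3 = 1) (u v : G) :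
    Commute u (v⁻¹ * u * v) := by
  have hv : v * v = v⁻¹ := eq_inv_of_mul_eq_one_left (by rw [← pow_three', h])
  have hv' : v⁻¹ * v⁻¹ = v := by rw [← mul_inv_rev, hv, inv_inv]
  calc u * (v⁻¹ * u * v) = u * v⁻¹ * u * v := by group
    _ = v * u⁻¹ * (v * v) := by rw [mul_mul_eq_inv_mul_inv_mul_inv (h _)]; group
    _ = v⁻¹ * v⁻¹ * u⁻¹ * v⁻¹ := by rw [hv, hv']
    _ = v⁻¹ * (u * v * u) := by rw [mul_mul_eq_inv_mul_inv_mul_inv (h _)]; group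
    _ = v⁻¹ * u * v * u := by group

theorem IsConj.commute_of_pow_three (h : ∀ g : G, g ^ 3 = 1) {x y : G} (hxy : IsConj x y) :
    Commute x y := by
  obtain ⟨c, rfl⟩ := isConj_iff.mp hxy
  simpa using commute_conj_of_pow_three h x c⁻¹

theorem isMulCommutative_normalClosure_singleton_of_pow_three (h : ∀ g : G, g ^ 3 = 1)
    (g : G) : IsMulCommutative (normalClosure {g}) := by
  refine isMulCommutative_closure fun x hx y hy => ?_
  obtain ⟨_, rfl, hgx⟩ := Group.mem_conjugatesOfSet_iff.mp hx
  obtain ⟨_, rfl, hgy⟩ := Group.mem_conjugatesOfSet_iff.mp hy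
  exact (hgx.symm.trans hgy).commute_of_pow_three h

theorem closure_pair_quotient_eq_top {a b : G} (hab : closure {a, b} = ⊤) (N : Subgroup G)
    [N.Normal] : closure {(a : G ⧸ N), (b : G ⧸ N)} = ⊤ := by
  rw [← QuotientGroup.coe_mk', ← Set.image_pair, ← MonoidHom.map_closure, hab,
    map_top_of_surjective _ (QuotientGroup.mk'_surjective N)]

theorem commutator_le_normalClosure_commutatorElement {a b : G} (hab : closure {a, b} = ⊤) :
    commutator G ≤ normalClosure {⁅a, b⁆} := by
  set N := normalClosure {⁅a, b⁆}
  apply Normal.quotient_commutative_iff_commutator_le.mp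
  have hcomm : (a : G ⧸ N) * b = b * a := by
    rw [← commutatorElement_eq_one_iff_mul_comm, ← QuotientGroup.coe_mk', ← map_commutatorElement,
      QuotientGroup.coe_mk', QuotientGroup.eq_one_iff]
    exact subset_normalClosure rfl
  have := isMulCommutative_closure (k := {(a : G ⧸ N), (b : G ⧸ N)}) (by
    rintro x (rfl | rfl) y (rfl | rfl) <;> first | rfl | exact hcomm | exact hcomm.symm)
  rw [closure_pair_quotient_eq_top hab N] at this
  exact ⟨⟨fun x y => setLike_mul_comm (mem_top x) (mem_top y)⟩⟩

theorem derivedSeries_two_eq_bot_of_pow_three (h : ∀ g : G, g ^ 3 = 1) {a b : G}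
    (hab : closure {a, b} = ⊤) : derivedSeries G 2 = ⊥ := by
  have hle := commutator_le_normalClosure_commutatorElement hab
  have := isMulCommutative_normalClosure_singleton_of_pow_three h ⁅a, b⁆
  rw [derivedSeries_succ, derivedSeries_one, eq_bot_iff, ← commutator_self_eq_bot_iff.mpr this]
  exact commutator_mono hle hle

theorem derivedSeries_two_le_of_pow_three_mem {a b : G}
    (hab : closure {a, b} = ⊤) (N : Subgroup G) [N.Normal] (hN : ∀ g : G, g ^ 3 ∈ N) :
    derivedSeries G 2 ≤ N := by
  have hQ : derivedSeries (G ⧸ N) 2 = ⊥ := by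
    refine derivedSeries_two_eq_bot_of_pow_three (a := a) (b := b) ?_ ?_
    · rintro ⟨g⟩
      exact (QuotientGroup.eq_one_iff _).mpr (hN g)
    · exact closure_pair_quotient_eq_top hab N
  intro z hz
  have := map_derivedSeries_le_derivedSeries (QuotientGroup.mk' N) 2 (mem_map_of_mem _ hz)
  rwa [hQ, mem_bot, QuotientGroup.mk'_apply, QuotientGroup.eq_one_iff] at this

end ExponentThree

def powProducts (G : Type*) [Group G] (n : ℕ) : Subgroup G where
  carrier := {z | ∃ L : List G, L ≠ [] ∧ z = (L.map (· ^ n)).prod}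
  one_mem' := ⟨[1], by simp⟩
  mul_mem' := by
    rintro _ _ ⟨L, hL, rfl⟩ ⟨M, -, rfl⟩
    exact ⟨L ++ M, by simp [hL], by simp⟩
  inv_mem' := by
    rintro _ ⟨L, hL, rfl⟩
    refine ⟨(L.map (·⁻¹)).reverse, by simpa using hL, ?_⟩
    simp [List.prod_inv_reverse, Function.comp_def]

instance powProducts.normal (G : Type*) [Group G] (n : ℕ) : (powProducts G n).Normal where
  conj_mem := by
    rintro _ ⟨L, hL, rfl⟩ g
    refine ⟨L.map (MulAut.conj g), by simpa using hL, ?_⟩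
    simp [← MulAut.conj_apply, map_list_prod, Function.comp_def]

theorem pow_mem_powProducts {G : Type*} [Group G] (n : ℕ) (g : G) : g ^ n ∈ powProducts G n :=
  ⟨[g], by simp, by simp⟩

theorem stmt_15 (z : FreeGroup (Fin 2)) :
    (∃ L : List (FreeGroup (Fin 2)), L ≠ [] ∧ z = (L.map (fun u => u ^ 3)).prod) ↔
    (∃ L : List (FreeGroup (Fin 2)), L ≠ [] ∧
      z * ((L.map (fun u => u ^ 3)).prod)⁻¹ ∈ derivedSeries (FreeGroup (Fin 2)) 2) := by
  have hgen : closure {FreeGroup.of 0, FreeGroup.of 1} = (⊤ : Subgroup (FreeGroup (Fin 2))) := by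
    rw [← FreeGroup.closure_range_of]; congr; ext; simp [Fin.exists_fin_two, eq_comm]
  constructor
  · rintro ⟨L, hL, rfl⟩
    exact ⟨L, hL, by rw [mul_inv_cancel]; exact one_mem _⟩
  · rintro ⟨L, hL, hz⟩
    have hdiff := derivedSeries_two_le_of_pow_three_mem hgen _ (pow_mem_powProducts 3) hz
    have hz' : z ∈ powProducts _ 3 := by simpa using mul_mem hdiff ⟨L, hL, rfl⟩
    exact hz'
end
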